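/- arXiv:1910.13261 — 5 statements merged into one kernel-verified Lean document; each statement's English description precedes it below -/
import Mathlib

section
/- Let p ≥ 2 be an integer and λ > 0 a real number. Let T : ℝ → ℝ be a function such that for every real z ≤ 0 one has T(z) > 0 and z·T(z)^p − T(z) + 1 = 0. Define f : ℝ → ℝ by f(s) = s·√(T(−λ·s^(2p−2))). Then f is strictly increasing on ℝ; equivalently, for all real s ≠ s', (f(s) − f(s'))/(s − s') > 0. -/
/-- Positivity of the Jacobian of the change of variables `H ↦ K` for the Hermitian
matrix model, in scalar form: with `T` the (positive) Fuss–Catalan function, the map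
`f(s) = s·√(T(−λ s^(2p−2)))` is strictly increasing, equivalently all difference
quotients are positive. -/
theorem fussCatalan_change_of_variables_strictMono
    (p : ℕ) (hp : 2 ≤ p) (lam : ℝ) (hlam : 0 < lam)
    (T : ℝ → ℝ)
    (hTpos : ∀ z : ℝ, z ≤ 0 → 0 < T z)
    (hTeq : ∀ z : ℝ, z ≤ 0 → z * (T z) ^ p - T z + 1 = 0)
    (f : ℝ → ℝ)
    (hf : ∀ s : ℝ, f s = s * Real.sqrt (T (-lam * s ^ (2 * p - 2)))) :
    StrictMono f ∧ ∀ s s' : ℝ, s ≠ s' → 0 < (f s - f s') / (s - s') := by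
  have h2 : 2 * p - 2 = (p - 1) * 2 := by omega
  set g : ℝ → ℝ := fun K => K * Real.sqrt (1 + lam * K ^ (2 * p - 2)) with hg
  have hpos : ∀ K : ℝ, 0 < 1 + lam * K ^ (2 * p - 2) := by
    intro K
    have : 0 ≤ K ^ (2 * p - 2) := by rw [h2, pow_mul]; positivity
    nlinarith
  have key : ∀ a b : ℝ, 0 ≤ a → a < b → g a < g b := by
    intro a b ha hab
    have hb : 0 < b := lt_of_le_of_lt ha hab
    have hle : a ^ (2 * p - 2) ≤ b ^ (2 * p - 2) := pow_le_pow_left₀ ha hab.le _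
    have hsl : Real.sqrt (1 + lam * a ^ (2 * p - 2)) ≤
        Real.sqrt (1 + lam * b ^ (2 * p - 2)) := Real.sqrt_le_sqrt (by nlinarith)
    have hsp : 0 < Real.sqrt (1 + lam * a ^ (2 * p - 2)) := Real.sqrt_pos.mpr (hpos a)
    exact mul_lt_mul hab hsl hsp hb.le
  have godd : ∀ K : ℝ, g (-K) = - g K := by
    intro K
    have he : Even (2 * p - 2) := ⟨p - 1, by omega⟩
    simp only [hg, he.neg_pow, neg_mul]
  have gmono : StrictMono g := by
    intro a b hab
    rcases le_or_gt 0 a with ha | ha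
    · exact key a b ha hab
    · rcases le_or_gt b 0 with hb | hb
      · have := key (-b) (-a) (by linarith) (by linarith)
        rw [godd, godd] at this; linarith
      · have h1 : g a < 0 := mul_neg_of_neg_of_pos ha (Real.sqrt_pos.mpr (hpos a))
        have h2' : 0 < g b := mul_pos hb (Real.sqrt_pos.mpr (hpos b))
        linarith
  have hleft : ∀ s : ℝ, g (f s) = s := by
    intro s
    set A := s ^ (2 * p - 2) with hA
    have hA0 : 0 ≤ A := by rw [hA, h2, pow_mul]; positivity
    have hz : -lam * A ≤ 0 := by nlinarith
    have hT : 0 < T (-lam * A) := hTpos _ hz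
    have heq := hTeq _ hz
    set u := T (-lam * A) with hu
    have hfs : f s = s * Real.sqrt u := hf s
    have hpow : (s * Real.sqrt u) ^ (2 * p - 2) = A * u ^ (p - 1) := by
      rw [mul_pow, hA, h2, pow_mul, pow_mul]
      congr 1
      rw [← pow_mul, mul_comm, pow_mul, Real.sq_sqrt hT.le]
    have hup : u ^ p = u ^ (p - 1) * u := by
      rw [← pow_succ]; congr 1; omega
    have hprod : u * (1 + lam * (A * u ^ (p - 1))) = 1 := by
      linear_combination (-1 : ℝ) * heq + (-(lam * A)) * hup
    have hgf : g (f s) = s * (Real.sqrt u *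
        Real.sqrt (1 + lam * (A * u ^ (p - 1)))) := by
      rw [hfs]; simp only [hg]; rw [hpow, mul_assoc]
    rw [hgf, ← Real.sqrt_mul hT.le, hprod, Real.sqrt_one, mul_one]
  have hmono : StrictMono f := by
    intro s s' h
    have hlt : g (f s) < g (f s') := by rw [hleft, hleft]; exact h
    exact gmono.lt_iff_lt.mp hlt
  refine ⟨hmono, ?_⟩
  intro s s' hne
  rcases lt_or_gt_of_ne hne with h | h
  · have h1 : f s < f s' := hmono h
    rw [div_pos_iff]; right; constructor <;> linarith
  · have h1 : f s' < f s := hmono h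
    exact div_pos (by linarith) (by linarith)
end

section
/- Let p ≥ 1 be an integer and let λ, s, s', T, T' be complex numbers satisfying (−λ·s^(2p−2))·T^p − T + 1 = 0 and (−λ·s'^(2p−2))·T'^p − T' + 1 = 0. Then (s²·T − s'²·T')·(1 + λ·Σ_{k=0}^{p−1} (s²·T)^k·(s'²·T')^(p−1−k)) = s² − s'². -/
/-- Algebraic identity underlying the positivity of the Jacobian: if `T` and `T'`
satisfy the Fuss–Catalan equation at `z = −λ s^(2p−2)` and `z' = −λ s'^(2p−2)`
respectively, then `(s²T − s'²T')·(1 + λ·Σ_{k<p} (s²T)^k (s'²T')^(p−1−k)) = s² − s'²`. -/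
theorem fussCatalan_jacobian_identity
    (p : ℕ) (hp : 1 ≤ p) (lam s s' T T' : ℂ)
    (hT : (-lam * s ^ (2 * p - 2)) * T ^ p - T + 1 = 0)
    (hT' : (-lam * s' ^ (2 * p - 2)) * T' ^ p - T' + 1 = 0) :
    (s ^ 2 * T - s' ^ 2 * T') *
      (1 + lam * ∑ k ∈ Finset.range p, (s ^ 2 * T) ^ k * (s' ^ 2 * T') ^ (p - 1 - k)) =
    s ^ 2 - s' ^ 2 := by
  set a := s ^ 2 * T with hadef
  set b := s' ^ 2 * T' with hbdef
  have hpow : ∀ x : ℂ, x ^ (2 * p - 2) * x ^ 2 = (x ^ 2) ^ p := by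
    intro x
    rw [← pow_mul, ← pow_add]
    congr 1
    omega
  have ha : a = s ^ 2 - lam * a ^ p := by
    rw [hadef, mul_pow]
    linear_combination (-(s ^ 2)) * hT - lam * T ^ p * hpow s
  have hb : b = s' ^ 2 - lam * b ^ p := by
    rw [hbdef, mul_pow]
    linear_combination (-(s' ^ 2)) * hT' - lam * T' ^ p * hpow s'
  have hgeo : (∑ k ∈ Finset.range p, a ^ k * b ^ (p - 1 - k)) * (a - b) = a ^ p - b ^ p :=
    geom_sum₂_mul a b p
  linear_combination ha - hb + lam * hgeo
end

section
/- Let p ≥ 2 be an integer and λ > 0 a real number. Let T : ℝ → ℝ be such that for every real z ≤ 0 one has T(z) > 0 and z·T(z)^p − T(z) + 1 = 0. Define k : ℝ → ℝ by k(v) = v·√(1 + λ·v^(2p−2)) and h : ℝ → ℝ by h(u) = u·√(T(−λ·u^(2p−2))). Then for every real s, k(h(s)) = s and h(k(s)) = s; that is, h and k are mutually inverse bijections of ℝ. -/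
/-! The substitution `t = T(-λ u^(2p-2))` turns the Fuss–Catalan equation into
`t · (1 + λ (u √t)^(2p-2)) = 1`, which is `k (h u) = u`. Conversely, for `a = 1 + λ v^(2p-2)` the
number `1/a` solves the Fuss–Catalan equation at `z = -λ (v √a)^(2p-2)`; since
`t ↦ z t^p - t + 1` is strictly decreasing on `t ≥ 0` when `z ≤ 0`, the positive root is unique,
so `T z = 1/a` and `h (k v) = v`. -/

lemma strictAntiOn_fussCatalan (p : ℕ) {z : ℝ} (hz : z ≤ 0) :
    StrictAntiOn (fun t : ℝ => z * t ^ p - t + 1) (Set.Ici 0) := by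
  intro a ha b _ hab
  have := mul_le_mul_of_nonpos_left (pow_le_pow_left₀ ha hab.le p) hz
  dsimp only
  linarith

lemma fussCatalan_root_eq_inv {n : ℕ} {c t : ℝ} (hc : 0 ≤ c) (ht : 0 < t)
    (hroot : -(c * (1 + c) ^ n) * t ^ (n + 1) - t + 1 = 0) : t = (1 + c)⁻¹ := by
  have ha : 0 < 1 + c := by linarith
  have hinv : -(c * (1 + c) ^ n) * (1 + c)⁻¹ ^ (n + 1) - (1 + c)⁻¹ + 1 = 0 := by
    rw [pow_succ, inv_pow]
    field_simp
    ring
  have hz : -(c * (1 + c) ^ n) ≤ 0 := neg_nonpos.mpr (by positivity)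
  exact (strictAntiOn_fussCatalan (n + 1) hz).injOn ht.le (inv_pos.mpr ha).le
    (hroot.trans hinv.symm)

lemma mul_sqrt_pow_two_mul {x : ℝ} (hx : 0 ≤ x) (s : ℝ) (n : ℕ) :
    (s * √x) ^ (2 * n) = s ^ (2 * n) * x ^ n := by
  rw [mul_pow, pow_mul (√x), Real.sq_sqrt hx]

lemma mul_sqrt_mul_sqrt_of_mul_eq_one {a b : ℝ} (ha : 0 ≤ a) (hab : a * b = 1) (s : ℝ) :
    s * √a * √b = s := by
  rw [mul_assoc, ← Real.sqrt_mul ha, hab, Real.sqrt_one, mul_one]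

/-- The scalar functions `k_λ(v) = v·√(1+λv^(2p−2))` and `h_λ(u) = u·√(T(−λu^(2p−2)))`
(with `T` the positive Fuss–Catalan function) are mutually inverse bijections of `ℝ`. -/
theorem h_and_k_mutually_inverse
    (p : ℕ) (hp : 2 ≤ p) (lam : ℝ) (hlam : 0 < lam)
    (T : ℝ → ℝ)
    (hTpos : ∀ z : ℝ, z ≤ 0 → 0 < T z)
    (hTeq : ∀ z : ℝ, z ≤ 0 → z * (T z) ^ p - T z + 1 = 0)
    (k h : ℝ → ℝ)
    (hk : ∀ v : ℝ, k v = v * Real.sqrt (1 + lam * v ^ (2 * p - 2)))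
    (hh : ∀ u : ℝ, h u = u * Real.sqrt (T (-lam * u ^ (2 * p - 2)))) :
    (∀ s : ℝ, k (h s) = s ∧ h (k s) = s) ∧
      Function.Bijective h ∧ Function.Bijective k := by
  obtain ⟨n, rfl⟩ : ∃ n, p = n + 1 := ⟨p - 1, by omega⟩
  have hexp : 2 * (n + 1) - 2 = 2 * n := by omega
  simp only [hexp] at hk hh
  have hc (s : ℝ) : 0 ≤ lam * s ^ (2 * n) :=
    mul_nonneg hlam.le ((even_two_mul n).pow_nonneg s)
  have hkh (s : ℝ) : k (h s) = s := by
    have hz : -lam * s ^ (2 * n) ≤ 0 := by linarith [hc s]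
    have ht := hTpos _ hz
    rw [hh, hk, mul_sqrt_pow_two_mul ht.le]
    refine mul_sqrt_mul_sqrt_of_mul_eq_one ht.le ?_ s
    linear_combination -hTeq _ hz
  have hhk (s : ℝ) : h (k s) = s := by
    have ha : 0 < 1 + lam * s ^ (2 * n) := by linarith [hc s]
    have hz : -lam * (s ^ (2 * n) * (1 + lam * s ^ (2 * n)) ^ n) ≤ 0 := by
      nlinarith [hc s, pow_pos ha n]
    have hT := fussCatalan_root_eq_inv (hc s) (hTpos _ hz) (by linear_combination hTeq _ hz)
    rw [hk, hh, mul_sqrt_pow_two_mul ha.le, hT]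
    exact mul_sqrt_mul_sqrt_of_mul_eq_one ha.le (mul_inv_cancel₀ ha.ne') s
  exact ⟨fun s => ⟨hkh s, hhk s⟩, Function.bijective_iff_has_inverse.mpr ⟨k, hkh, hhk⟩,
    Function.bijective_iff_has_inverse.mpr ⟨h, hhk, hkh⟩⟩
end

section
/- Let ψ ∈ (0, π) and c₀ > 0. Then there exists a constant C > 0, depending only on ψ and c₀, such that for every complex number u with Re(u) ≤ |u|·cos ψ and every real μ ≥ 0 with |u − μ| ≥ c₀, one has 1/|u − μ| ≤ C·min(1/(1 + |u|), 1/(1 + μ)). -/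
/-!
Write `a = ‖u‖` and `m = max (cos ψ) 0 < 1`. Since `Re u ≤ a m` and `μ ≥ 0`,
`‖u - μ‖² = a² - 2 μ Re u + μ² ≥ (1 - m)(a² + μ²) + m (a - μ)²`, so `‖u - μ‖` dominates
`(1 - m) max a μ`; together with `‖u - μ‖ ≥ c₀` this gives
`1 + max a μ ≤ (1/c₀ + 1/(1 - m)) ‖u - μ‖`.
-/

open Real

lemma Real.cos_lt_one_of_mem_Ioo {ψ : ℝ} (hψ : ψ ∈ Set.Ioo 0 π) : cos ψ < 1 := by
  simpa using cos_lt_cos_of_nonneg_of_le_pi le_rfl hψ.2.le hψ.1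

namespace Complex

variable {u : ℂ} {μ m : ℝ}

lemma one_sub_mul_sq_add_sq_le_norm_sub_ofReal_sq (hm : 0 ≤ m) (hμ : 0 ≤ μ)
    (hu : u.re ≤ ‖u‖ * m) : (1 - m) * (‖u‖ ^ 2 + μ ^ 2) ≤ ‖u - μ‖ ^ 2 := by
  have hnorm : ‖u‖ ^ 2 = u.re ^ 2 + u.im ^ 2 := by
    rw [Complex.sq_norm, normSq_apply]; ring
  have hdist : ‖u - μ‖ ^ 2 = ‖u‖ ^ 2 - 2 * μ * u.re + μ ^ 2 := by
    rw [Complex.sq_norm, normSq_apply, hnorm]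
    simp only [sub_re, sub_im, ofReal_re, ofReal_im, sub_zero]
    ring
  have hre : μ * u.re ≤ μ * (‖u‖ * m) := mul_le_mul_of_nonneg_left hu hμ
  nlinarith [mul_nonneg hm (sq_nonneg (‖u‖ - μ))]

lemma one_sub_mul_max_le_norm_sub_ofReal (hm₀ : 0 ≤ m) (hm₁ : m ≤ 1) (hμ : 0 ≤ μ)
    (hu : u.re ≤ ‖u‖ * m) : (1 - m) * max ‖u‖ μ ≤ ‖u - μ‖ := by
  refine le_of_sq_le_sq ?_ (norm_nonneg _)
  have hmax : max ‖u‖ μ ^ 2 ≤ ‖u‖ ^ 2 + μ ^ 2 := by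
    rcases max_choice ‖u‖ μ with h | h <;> rw [h] <;> nlinarith
  calc ((1 - m) * max ‖u‖ μ) ^ 2 = (1 - m) * ((1 - m) * max ‖u‖ μ ^ 2) := by ring
    _ ≤ 1 * ((1 - m) * (‖u‖ ^ 2 + μ ^ 2)) := by gcongr; linarith
    _ ≤ ‖u - μ‖ ^ 2 := by
      rw [one_mul]; exact one_sub_mul_sq_add_sq_le_norm_sub_ofReal_sq hm₀ hμ hu

lemma one_add_max_le_mul_norm_sub_ofReal {c₀ : ℝ} (hc₀ : 0 < c₀) (hm₀ : 0 ≤ m) (hm₁ : m < 1)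
    (hμ : 0 ≤ μ) (hu : u.re ≤ ‖u‖ * m) (hdist : c₀ ≤ ‖u - μ‖) :
    1 + max ‖u‖ μ ≤ (1 / c₀ + 1 / (1 - m)) * ‖u - μ‖ := by
  have hδ : 0 < 1 - m := by linarith
  have h₁ : 1 ≤ ‖u - μ‖ / c₀ := (one_le_div hc₀).mpr hdist
  have h₂ : max ‖u‖ μ ≤ ‖u - μ‖ / (1 - m) :=
    (le_div_iff₀' hδ).mpr (one_sub_mul_max_le_norm_sub_ofReal hm₀ hm₁.le hμ hu)
  calc 1 + max ‖u‖ μ ≤ ‖u - μ‖ / c₀ + ‖u - μ‖ / (1 - m) := add_le_add h₁ h₂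
    _ = (1 / c₀ + 1 / (1 - m)) * ‖u - μ‖ := by ring

end Complex

lemma one_div_le_mul_min_one_div {a b d C : ℝ} (ha : 0 ≤ a) (hb : 0 ≤ b) (hd : 0 < d)
    (h : 1 + max a b ≤ C * d) : 1 / d ≤ C * min (1 / (1 + a)) (1 / (1 + b)) := by
  have hC : 0 ≤ C := by
    by_contra! hC
    nlinarith [le_max_left a b]
  have key : ∀ x, 0 ≤ x → x ≤ max a b → 1 / d ≤ C * (1 / (1 + x)) := fun x hx hxab => by
    rw [mul_one_div, div_le_div_iff₀ hd (by linarith)]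
    linarith
  rw [mul_min_of_nonneg _ _ hC]
  exact le_min (key a ha (le_max_left a b)) (key b hb (le_max_right a b))

/-- Choice of the keyhole contour: if `u` stays at angle at least `ψ` away from the
positive real axis (i.e. `Re u ≤ |u|·cos ψ`) and at distance at least `c₀` from the
nonnegative real `μ`, then `1/|u−μ| ≤ C·min(1/(1+|u|), 1/(1+μ))` for a constant `C`
depending only on `ψ` and `c₀`. -/
theorem keyhole_contour_resolvent_bound
    (psi : ℝ) (hpsi : psi ∈ Set.Ioo 0 Real.pi) (c0 : ℝ) (hc0 : 0 < c0) :
    ∃ C : ℝ, 0 < C ∧ ∀ (u : ℂ) (mu : ℝ),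
      u.re ≤ ‖u‖ * Real.cos psi → 0 ≤ mu →
      c0 ≤ ‖u - (mu : ℂ)‖ →
      1 / ‖u - (mu : ℂ)‖ ≤
        C * min (1 / (1 + ‖u‖)) (1 / (1 + mu)) := by
  set m := max (cos psi) 0
  have hm₁ : m < 1 := max_lt (cos_lt_one_of_mem_Ioo hpsi) one_pos
  refine ⟨1 / c0 + 1 / (1 - m), by positivity, fun u mu hre hmu hdist => ?_⟩
  have hu : u.re ≤ ‖u‖ * m :=
    hre.trans (mul_le_mul_of_nonneg_left (le_max_left _ _) (norm_nonneg u))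
  exact one_div_le_mul_min_one_div (norm_nonneg u) hmu (hc0.trans_le hdist)
    (Complex.one_add_max_le_mul_norm_sub_ofReal hc0 (le_max_right _ _) hm₁ hmu hu hdist)
end

section
/- Let p ≥ 2 be an integer and C ≥ 1. Let λ ∈ ℂ with |λ| ≤ 1, let μ, μ', u, u' be complex numbers, and let R ∈ ℂ. Assume (i) |R| ≤ C·max{1, |λ|^(1/(2p))·|μ|^(1−1/p), |λ|^(1/(2p))·|μ'|^(1−1/p)}, and (ii) for every pair (v, ν) with v ∈ {u, u'} and ν ∈ {μ, μ'} one has v ≠ ν and 1/|v − ν| ≤ C·min(1/(1+|v|), 1/(1+|ν|)). Then |R|·( 1/(|u−μ|·|u'−μ|·|u−μ'|) + 1/(|u−μ|·|u−μ'|·|u'−μ'|) ) ≤ 2·C⁴·(1+|u|)^(−(1+1/p))·(1+|u'|)^(−1). -/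
/-!
Once `|λ| ≤ 1`, `|R| ≲ max(1, |μ|^(1-1/p), |μ'|^(1-1/p))`, and the growth is absorbed by the
distance from `u` to whichever of `μ, μ'` realises the maximum: interpolating
`min(1/(1+|u|), 1/(1+|ν|)) ≤ (1+|u|)^(-1/p) (1+|ν|)^(-(1-1/p))` turns `|ν|^(1-1/p)/|u - ν|`
into `C (1+|u|)^(-1/p)`. The other distance to `u` gives a full `(1+|u|)^(-1)`, and each
distance to `u'` gives `(1+|u'|)^(-1)`.
-/

open Real

lemma Real.min_le_rpow_mul_rpow {a b s : ℝ} (ha : 0 ≤ a) (hb : 0 ≤ b) (hs0 : 0 ≤ s)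
    (hs1 : s ≤ 1) : min a b ≤ a ^ s * b ^ (1 - s) := by
  have hm : 0 ≤ min a b := le_min ha hb
  calc min a b = min a b ^ s * min a b ^ (1 - s) := by
        rw [← rpow_add' hm (by norm_num), add_sub_cancel, rpow_one]
    _ ≤ a ^ s * b ^ (1 - s) := by
        gcongr
        exacts [min_le_left a b, min_le_right a b]

lemma max_one_rpow_mul_one_div_le {C a x d s : ℝ} (hC : 0 ≤ C) (ha0 : 0 ≤ a) (ha1 : a ≤ 1)
    (hx : 0 ≤ x) (hd : 0 < d) (hs0 : 0 ≤ s) (hs1 : s ≤ 1)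
    (hd_le : 1 / d ≤ C * min a (1 / (1 + x))) :
    max 1 (x ^ (1 - s)) * (1 / d) ≤ C * a ^ s := by
  have hx1 : 0 < 1 + x := by linarith
  rw [max_mul_of_nonneg _ _ (by positivity)]
  refine max_le ?_ ?_
  · calc 1 * (1 / d) ≤ C * a := by
          rw [one_mul]; exact hd_le.trans (by gcongr; exact min_le_left _ _)
      _ ≤ C * a ^ s := by gcongr; exact self_le_rpow_of_le_one ha0 ha1 hs1
  · have hfrac : (x / (1 + x)) ^ (1 - s) ≤ 1 :=
      rpow_le_one (by positivity) ((div_le_one hx1).2 (by linarith)) (by linarith)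
    calc x ^ (1 - s) * (1 / d)
        ≤ x ^ (1 - s) * (C * (a ^ s * (1 / (1 + x)) ^ (1 - s))) := by
          gcongr
          exact hd_le.trans (by gcongr; exact min_le_rpow_mul_rpow ha0 (by positivity) hs0 hs1)
      _ = C * a ^ s * (x / (1 + x)) ^ (1 - s) := by
          rw [div_eq_mul_one_div x, mul_rpow hx (by positivity)]; ring
      _ ≤ C * a ^ s := mul_le_of_le_one_right (by positivity) hfrac

lemma max_rpow_mul_one_div_mul_one_div_le {C a x y d d' s : ℝ} (hC : 0 ≤ C) (ha0 : 0 < a)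
    (ha1 : a ≤ 1) (hx : 0 ≤ x) (hy : 0 ≤ y) (hd : 0 < d) (hd' : 0 < d') (hs0 : 0 ≤ s)
    (hs1 : s ≤ 1) (hd_le : 1 / d ≤ C * min a (1 / (1 + x)))
    (hd'_le : 1 / d' ≤ C * min a (1 / (1 + y))) :
    max (max 1 (x ^ (1 - s))) (y ^ (1 - s)) * (1 / d) * (1 / d') ≤ C ^ 2 * a ^ (1 + s) := by
  have hda : 1 / d ≤ C * a := hd_le.trans (by gcongr; exact min_le_left _ _)
  have hd'a : 1 / d' ≤ C * a := hd'_le.trans (by gcongr; exact min_le_left _ _)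
  have hx_le := max_one_rpow_mul_one_div_le hC ha0.le ha1 hx hd hs0 hs1 hd_le
  have hy_le := max_one_rpow_mul_one_div_le hC ha0.le ha1 hy hd' hs0 hs1 hd'_le
  rw [add_comm, rpow_add_one ha0.ne']
  rcases le_total (max 1 (x ^ (1 - s))) (max 1 (y ^ (1 - s))) with hxy | hxy
  · calc max (max 1 (x ^ (1 - s))) (y ^ (1 - s)) * (1 / d) * (1 / d')
          ≤ max 1 (y ^ (1 - s)) * (1 / d') * (1 / d) := by
            rw [mul_right_comm]
            gcongr ?_ * _ * _
            exact max_le hxy (le_max_right _ _)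
        _ ≤ C * a ^ s * (C * a) := by gcongr
        _ = C ^ 2 * (a ^ s * a) := by ring
  · calc max (max 1 (x ^ (1 - s))) (y ^ (1 - s)) * (1 / d) * (1 / d')
          ≤ max 1 (x ^ (1 - s)) * (1 / d) * (1 / d') := by
            gcongr ?_ * _ * _
            exact max_le le_rfl ((le_max_right _ _).trans hxy)
        _ ≤ C * a ^ s * (C * a) := by gcongr
        _ = C ^ 2 * (a ^ s * a) := by ring

theorem corner_operator_bound_general
    (p : ℕ) (C : ℝ)
    (lam : ℂ) (hlam : ‖lam‖ ≤ 1)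
    (mu mu' u u' R : ℂ)
    (hR : ‖R‖ ≤
      C * max (max 1
        (‖lam‖ ^ (1 / (2 * (p:ℝ))) * ‖mu‖ ^ (1 - 1 / (p:ℝ))))
        (‖lam‖ ^ (1 / (2 * (p:ℝ))) * ‖mu'‖ ^ (1 - 1 / (p:ℝ))))
    (hres : ∀ v ∈ ({u, u'} : Set ℂ), ∀ nu ∈ ({mu, mu'} : Set ℂ),
      v ≠ nu ∧ 1 / ‖v - nu‖ ≤
        C * min (1 / (1 + ‖v‖)) (1 / (1 + ‖nu‖))) :
    ‖R‖ *
      (1 / (‖u - mu‖ * ‖u' - mu‖ * ‖u - mu'‖) +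
       1 / (‖u - mu‖ * ‖u - mu'‖ * ‖u' - mu'‖)) ≤
    2 * C ^ 4 * (1 + ‖u‖) ^ (-(1 + 1 / (p:ℝ))) *
      (1 + ‖u'‖) ^ (-(1:ℝ)) := by
  set s : ℝ := 1 / (p : ℝ) with hs
  have hs0 : 0 ≤ s := by positivity
  have hs1 : s ≤ 1 := by rw [hs, one_div]; exact Nat.cast_inv_le_one p
  rw [rpow_neg (by positivity), ← inv_rpow (by positivity), rpow_neg_one, ← one_div,
    ← one_div]
  set a := 1 / (1 + ‖u‖)
  set b := 1 / (1 + ‖u'‖)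
  obtain ⟨hne1, hb1⟩ := hres u (by simp) mu (by simp)
  obtain ⟨hne2, hb2⟩ := hres u' (by simp) mu (by simp)
  obtain ⟨hne3, hb3⟩ := hres u (by simp) mu' (by simp)
  obtain ⟨hne4, hb4⟩ := hres u' (by simp) mu' (by simp)
  have hd1 : 0 < ‖u - mu‖ := norm_pos_iff.2 (sub_ne_zero.2 hne1)
  have hd2 : 0 < ‖u' - mu‖ := norm_pos_iff.2 (sub_ne_zero.2 hne2)
  have hd3 : 0 < ‖u - mu'‖ := norm_pos_iff.2 (sub_ne_zero.2 hne3)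
  have hd4 : 0 < ‖u' - mu'‖ := norm_pos_iff.2 (sub_ne_zero.2 hne4)
  have hC : 0 ≤ C :=
    (pos_of_mul_pos_left ((one_div_pos.2 hd1).trans_le hb1) (by positivity)).le
  have hRle : ‖R‖ ≤ C * max (max 1 (‖mu‖ ^ (1 - s))) (‖mu'‖ ^ (1 - s)) := by
    have hlam_pow : ‖lam‖ ^ (1 / (2 * (p:ℝ))) ≤ 1 :=
      rpow_le_one (by positivity) hlam (by positivity)
    exact hR.trans (by gcongr <;> exact mul_le_of_le_one_left (by positivity) hlam_pow)
  have hu_pair := max_rpow_mul_one_div_mul_one_div_le hC (by positivity)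
    (div_le_one_of_le₀ (by simp) (by positivity)) (norm_nonneg mu) (norm_nonneg mu') hd1 hd3
    hs0 hs1 hb1 hb3
  have hu_part :
      ‖R‖ * (1 / ‖u - mu‖) * (1 / ‖u - mu'‖) ≤ C * (C ^ 2 * a ^ (1 + s)) := by
    grw [hRle, mul_assoc C, mul_assoc C, hu_pair]
  have hb2' : 1 / ‖u' - mu‖ ≤ C * b := hb2.trans (by gcongr; exact min_le_left _ _)
  have hb4' : 1 / ‖u' - mu'‖ ≤ C * b := hb4.trans (by gcongr; exact min_le_left _ _)
  calc _ = ‖R‖ * (1 / ‖u - mu‖) * (1 / ‖u - mu'‖)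
        * (1 / ‖u' - mu‖ + 1 / ‖u' - mu'‖) := by field_simp
    _ ≤ C * (C ^ 2 * a ^ (1 + s)) * (C * b + C * b) := by gcongr
    _ = 2 * C ^ 4 * a ^ (1 + s) * b := by ring

/-- Eigenvalue form of the bound on the contour-corner operators: given the resolvent
bound on `R` and the contour bounds on the `1/|v−ν|` factors, the corner-operator
eigenvalue is bounded by `2·C⁴·(1+|u|)^{−(1+1/p)}·(1+|u'|)^{−1}`. -/
theorem corner_operator_bound
    (p : ℕ) (hp : 2 ≤ p) (C : ℝ) (hC : 1 ≤ C)
    (lam : ℂ) (hlam : ‖lam‖ ≤ 1)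
    (mu mu' u u' R : ℂ)
    (hR : ‖R‖ ≤
      C * max (max 1
        (‖lam‖ ^ (1 / (2 * (p:ℝ))) * ‖mu‖ ^ (1 - 1 / (p:ℝ))))
        (‖lam‖ ^ (1 / (2 * (p:ℝ))) * ‖mu'‖ ^ (1 - 1 / (p:ℝ))))
    (hres : ∀ v ∈ ({u, u'} : Set ℂ), ∀ nu ∈ ({mu, mu'} : Set ℂ),
      v ≠ nu ∧ 1 / ‖v - nu‖ ≤
        C * min (1 / (1 + ‖v‖)) (1 / (1 + ‖nu‖))) :
    ‖R‖ *
      (1 / (‖u - mu‖ * ‖u' - mu‖ * ‖u - mu'‖) +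
       1 / (‖u - mu‖ * ‖u - mu'‖ * ‖u' - mu'‖)) ≤
    2 * C ^ 4 * (1 + ‖u‖) ^ (-(1 + 1 / (p:ℝ))) *
      (1 + ‖u'‖) ^ (-(1:ℝ)) :=
  corner_operator_bound_general p C lam hlam mu mu' u u' R hR hres
end
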